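/- arXiv:1902.05040 — 2 statements merged into one kernel-verified Lean document; each statement's English description precedes it below -/
import Mathlib

section
/- The infimum over two-layer ReLU networks representing a fixed function f of (1/2)Σ_i ((w^{(2)}_i)^2 + ‖w^{(1)}_i‖_2^2) equals the infimum over such networks representing f with all hidden-layer weight vectors constrained to unit Euclidean norm of the ℓ1 norm ‖w^{(2)}‖_1 of the output-layer weights. -/
open Finset

private lemma relu_smul' (t u : ℝ) (ht : 0 ≤ t) : max (t * u) 0 = t * max u 0 := by
  rw [mul_max_of_nonneg _ _ ht, mul_zero]

/-- The infimum of the overall squared Euclidean norm `(1/2)∑ᵢ((w⁽²⁾ᵢ)² + ‖w⁽¹⁾ᵢ‖²)`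
over two-layer ReLU networks computing `f` equals the infimum of the ℓ¹ norm of the
output layer over such networks whose hidden-layer weight vectors have unit norm. -/
theorem l2_eq_l1_representation_cost (d : ℕ) (f : EuclideanSpace ℝ (Fin d) → ℝ) :
    sInf {C : ℝ | ∃ (k : ℕ) (W : Fin k → EuclideanSpace ℝ (Fin d))
        (b1 : Fin k → ℝ) (w2 : Fin k → ℝ) (b2 : ℝ),
        (∀ x, (∑ i, w2 i * max (inner ℝ (W i) x + b1 i) 0) + b2 = f x) ∧
        C = (1 / 2) * ∑ i, ((w2 i) ^ 2 + ‖W i‖ ^ 2)}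
      =
    sInf {C : ℝ | ∃ (k : ℕ) (W : Fin k → EuclideanSpace ℝ (Fin d))
        (b1 : Fin k → ℝ) (w2 : Fin k → ℝ) (b2 : ℝ),
        (∀ x, (∑ i, w2 i * max (inner ℝ (W i) x + b1 i) 0) + b2 = f x) ∧
        (∀ i, ‖W i‖ = 1) ∧
        C = ∑ i, |w2 i|} := by
  classical
  set S1 := {C : ℝ | ∃ (k : ℕ) (W : Fin k → EuclideanSpace ℝ (Fin d))
        (b1 : Fin k → ℝ) (w2 : Fin k → ℝ) (b2 : ℝ),
        (∀ x, (∑ i, w2 i * max (inner ℝ (W i) x + b1 i) 0) + b2 = f x) ∧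
        C = (1 / 2) * ∑ i, ((w2 i) ^ 2 + ‖W i‖ ^ 2)} with hS1def
  set S2 := {C : ℝ | ∃ (k : ℕ) (W : Fin k → EuclideanSpace ℝ (Fin d))
        (b1 : Fin k → ℝ) (w2 : Fin k → ℝ) (b2 : ℝ),
        (∀ x, (∑ i, w2 i * max (inner ℝ (W i) x + b1 i) 0) + b2 = f x) ∧
        (∀ i, ‖W i‖ = 1) ∧
        C = ∑ i, |w2 i|} with hS2def
  -- Step 1: S2 ⊆ S1, by rebalancing each neuron by √|w2 i|
  have hsub : S2 ⊆ S1 := by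
    rintro C ⟨k, W, b1, w2, b2, hrep, hunit, rfl⟩
    refine ⟨k, fun i => Real.sqrt |w2 i| • W i, fun i => Real.sqrt |w2 i| * b1 i,
      fun i => w2 i / Real.sqrt |w2 i|, b2, ?_, ?_⟩
    · intro x
      rw [← hrep x]
      congr 1
      refine Finset.sum_congr rfl fun i _ => ?_
      rcases eq_or_ne (w2 i) 0 with h | h
      · simp [h]
      · have ht : (0:ℝ) < Real.sqrt |w2 i| := Real.sqrt_pos.mpr (abs_pos.mpr h)
        rw [real_inner_smul_left, ← mul_add, relu_smul' _ _ ht.le, ← mul_assoc,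
          div_mul_cancel₀ _ ht.ne']
    · have key : ∀ i : Fin k,
          (w2 i / Real.sqrt |w2 i|) ^ 2 + ‖Real.sqrt |w2 i| • W i‖ ^ 2 = 2 * |w2 i| := by
        intro i
        have hW : ‖Real.sqrt |w2 i| • W i‖ ^ 2 = |w2 i| := by
          rw [norm_smul, mul_pow, hunit i, one_pow, mul_one, Real.norm_eq_abs,
            abs_of_nonneg (Real.sqrt_nonneg _), Real.sq_sqrt (abs_nonneg _)]
        rcases eq_or_ne (w2 i) 0 with h | h
        · simp [h, hW]
        · rw [hW, div_pow, Real.sq_sqrt (abs_nonneg _), ← sq_abs, sq, mul_div_assoc,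
            div_self (abs_ne_zero.mpr h), mul_one]
          ring
      rw [show (∑ i, ((w2 i / Real.sqrt |w2 i|) ^ 2 + ‖Real.sqrt |w2 i| • W i‖ ^ 2))
          = ∑ i, 2 * |w2 i| from Finset.sum_congr rfl fun i _ => key i,
        ← Finset.mul_sum, ← mul_assoc]
      norm_num
  -- Step 2: every element of S1 dominates an element of S2
  have hdom : ∀ C ∈ S1, ∃ C' ∈ S2, C' ≤ C := by
    rintro C ⟨k, W, b1, w2, b2, hrep, rfl⟩
    set s : Finset (Fin k) := Finset.univ.filter (fun i => W i ≠ 0) with hs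
    set e := s.equivFin with he
    refine ⟨∑ j : Fin s.card, |w2 (e.symm j : Fin k) * ‖W (e.symm j : Fin k)‖|,
      ⟨s.card, fun j => ‖W (e.symm j : Fin k)‖⁻¹ • W (e.symm j : Fin k),
       fun j => b1 (e.symm j : Fin k) / ‖W (e.symm j : Fin k)‖,
       fun j => w2 (e.symm j : Fin k) * ‖W (e.symm j : Fin k)‖,
       b2 + ∑ i ∈ Finset.univ.filter (fun i => ¬ W i ≠ 0), w2 i * max (b1 i) 0,
       ?_, ?_, rfl⟩, ?_⟩
    · -- representation
      intro x
      rw [← hrep x]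
      have hterm : ∀ i ∈ s,
          (w2 i * ‖W i‖) * max (inner ℝ (‖W i‖⁻¹ • W i) x + b1 i / ‖W i‖) 0
            = w2 i * max (inner ℝ (W i) x + b1 i) 0 := by
        intro i hi
        have hW : W i ≠ 0 := (Finset.mem_filter.mp hi).2
        have hn : (0:ℝ) < ‖W i‖ := norm_pos_iff.mpr hW
        rw [real_inner_smul_left, div_eq_inv_mul, ← mul_add,
          relu_smul' _ _ (inv_nonneg.mpr hn.le), mul_assoc, ← mul_assoc (‖W i‖),
          mul_inv_cancel₀ hn.ne', one_mul]
      have h1 : (∑ j : Fin s.card,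
          (w2 (e.symm j : Fin k) * ‖W (e.symm j : Fin k)‖) *
            max (inner ℝ (‖W (e.symm j : Fin k)‖⁻¹ • W (e.symm j : Fin k)) x
              + b1 (e.symm j : Fin k) / ‖W (e.symm j : Fin k)‖) 0)
          = ∑ i ∈ s, w2 i * max (inner ℝ (W i) x + b1 i) 0 := by
        rw [show (∑ j : Fin s.card,
            (w2 (e.symm j : Fin k) * ‖W (e.symm j : Fin k)‖) *
              max (inner ℝ (‖W (e.symm j : Fin k)‖⁻¹ • W (e.symm j : Fin k)) x
                + b1 (e.symm j : Fin k) / ‖W (e.symm j : Fin k)‖) 0)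
            = ∑ j : Fin s.card,
              w2 (e.symm j : Fin k) * max (inner ℝ (W (e.symm j : Fin k)) x
                + b1 (e.symm j : Fin k)) 0
          from Finset.sum_congr rfl fun j _ => hterm _ (e.symm j).2]
        rw [← Finset.sum_coe_sort s (fun i => w2 i * max (inner ℝ (W i) x + b1 i) 0)]
        exact Equiv.sum_comp e.symm (fun i : s => w2 (i : Fin k) *
          max (inner ℝ (W (i : Fin k)) x + b1 (i : Fin k)) 0)
      have h2 : (∑ i ∈ Finset.univ.filter (fun i => ¬ W i ≠ 0), w2 i * max (b1 i) 0)
          = ∑ i ∈ Finset.univ.filter (fun i => ¬ W i ≠ 0),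
              w2 i * max (inner ℝ (W i) x + b1 i) 0 := by
        refine Finset.sum_congr rfl fun i hi => ?_
        have hW : W i = 0 := not_not.mp (Finset.mem_filter.mp hi).2
        simp [hW]
      have h3 : (∑ i ∈ s, w2 i * max (inner ℝ (W i) x + b1 i) 0) +
          ∑ i ∈ Finset.univ.filter (fun i => ¬ W i ≠ 0),
            w2 i * max (inner ℝ (W i) x + b1 i) 0
          = ∑ i, w2 i * max (inner ℝ (W i) x + b1 i) 0 := by
        rw [hs]
        exact Finset.sum_filter_add_sum_filter_not _ _ _
      rw [h1, h2]
      linarith [h3]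
    · -- unit norms
      intro j
      have hW : W (e.symm j : Fin k) ≠ 0 := (Finset.mem_filter.mp (e.symm j).2).2
      exact norm_smul_inv_norm hW
    · -- cost comparison
      have h1 : (∑ j : Fin s.card, |w2 (e.symm j : Fin k) * ‖W (e.symm j : Fin k)‖|)
          = ∑ i ∈ s, |w2 i * ‖W i‖| := by
        rw [← Finset.sum_coe_sort s (fun i => |w2 i * ‖W i‖|)]
        exact Equiv.sum_comp e.symm (fun i : s => |w2 (i : Fin k) * ‖W (i : Fin k)‖|)
      calc (∑ j : Fin s.card, |w2 (e.symm j : Fin k) * ‖W (e.symm j : Fin k)‖|)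
          = ∑ i ∈ s, |w2 i * ‖W i‖| := h1
        _ ≤ ∑ i ∈ s, 1 / 2 * ((w2 i) ^ 2 + ‖W i‖ ^ 2) := by
            refine Finset.sum_le_sum fun i _ => ?_
            rw [abs_mul, abs_norm]
            nlinarith [two_mul_le_add_sq |w2 i| ‖W i‖, sq_abs (w2 i)]
        _ ≤ ∑ i, 1 / 2 * ((w2 i) ^ 2 + ‖W i‖ ^ 2) :=
            Finset.sum_le_sum_of_subset_of_nonneg (Finset.subset_univ s)
              (fun i _ _ => by positivity)
        _ = 1 / 2 * ∑ i, ((w2 i) ^ 2 + ‖W i‖ ^ 2) := (Finset.mul_sum _ _ _).symm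
  have hbdd1 : BddBelow S1 := by
    refine ⟨0, ?_⟩
    rintro C ⟨k, W, b1, w2, b2, -, rfl⟩
    positivity
  have hbdd2 : BddBelow S2 := by
    refine ⟨0, ?_⟩
    rintro C ⟨k, W, b1, w2, b2, -, -, rfl⟩
    positivity
  rcases Set.eq_empty_or_nonempty S1 with h1 | h1
  · rw [h1, Set.subset_eq_empty hsub h1]
  · obtain ⟨C, hC⟩ := h1
    obtain ⟨C', hC', hle⟩ := hdom C hC
    apply le_antisymm
    · exact csInf_le_csInf hbdd1 ⟨C', hC'⟩ hsub
    · refine le_csInf ⟨C, hC⟩ fun D hD => ?_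
      obtain ⟨D', hD', hle'⟩ := hdom D hD
      exact (csInf_le hbdd2 hD').trans hle'
end

section
/- Let g: R → R be a signed density (an integrable function) and s ∈ R. The optimal value of the convex program: minimize (1/2)∫_R(|g(b)+α(b)| + |g(b)−α(b)|) db over integrable α subject to ∫_R α(b) db = s, equals max(∫_R |g(b)| db, |s|). -/
open MeasureTheory

lemma abs_add_abs_sub_eq (x y : ℝ) : |x + y| + |x - y| = 2 * max |x| |y| := by
  rcases abs_cases (x+y) with ⟨h1,_⟩|⟨h1,_⟩ <;> rcases abs_cases (x-y) with ⟨h2,_⟩|⟨h2,_⟩ <;>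
    rcases max_cases |x| |y| with ⟨h3,_⟩|⟨h3,_⟩ <;> rcases abs_cases x with ⟨h4,_⟩|⟨h4,_⟩ <;>
    rcases abs_cases y with ⟨h5,_⟩|⟨h5,_⟩ <;> linarith

lemma cost_eq_integral_max (g α : ℝ → ℝ) (_hg : Integrable g) (_hα : Integrable α) :
    (1 / 2) * (∫ b, (|g b + α b| + |g b - α b|)) = ∫ b, max |g b| |α b| := by
  have h1 : (fun b => |g b + α b| + |g b - α b|) = fun b => 2 * max |g b| |α b| := by
    funext b; exact abs_add_abs_sub_eq _ _
  rw [h1, integral_const_mul]; ring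

lemma lb_aux (g α : ℝ → ℝ) (hg : Integrable g) (hα : Integrable α) :
    max (∫ b, |g b|) |∫ b, α b| ≤ ∫ b, max |g b| |α b| := by
  have hmax : Integrable (fun b => max |g b| |α b|) := hg.abs.sup hα.abs
  refine max_le ?_ ?_
  · exact integral_mono hg.abs hmax fun b => le_max_left _ _
  · have h1 : |∫ b, α b| ≤ ∫ b, |α b| := by
      simpa [Real.norm_eq_abs] using norm_integral_le_integral_norm (μ := volume) α
    exact h1.trans (integral_mono hα.abs hmax fun b => le_max_right _ _)

/-- The optimal value of minimizing `(1/2)∫(|g+α| + |g−α|)` over integrable `α`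
with `∫α = s` equals `max (∫|g|) |s|`. -/
theorem min_cost_value (g : ℝ → ℝ) (hg : Integrable g) (s : ℝ) :
    sInf {V : ℝ | ∃ α : ℝ → ℝ, Integrable α ∧ (∫ b, α b) = s ∧
        V = (1 / 2) * ∫ b, (|g b + α b| + |g b - α b|)}
      = max (∫ b, |g b|) |s| := by
  set M : ℝ := ∫ b, |g b| with hM
  have hM0 : 0 ≤ M := integral_nonneg fun b => abs_nonneg _
  have hlb : ∀ V ∈ {V : ℝ | ∃ α : ℝ → ℝ, Integrable α ∧ (∫ b, α b) = s ∧
      V = (1 / 2) * ∫ b, (|g b + α b| + |g b - α b|)}, max M |s| ≤ V := by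
    rintro V ⟨α, hα, hint, rfl⟩
    rw [cost_eq_integral_max g α hg hα]
    have := lb_aux g α hg hα
    rwa [hint] at this
  have hmem : max M |s| ∈ {V : ℝ | ∃ α : ℝ → ℝ, Integrable α ∧ (∫ b, α b) = s ∧
      V = (1 / 2) * ∫ b, (|g b + α b| + |g b - α b|)} := by
    rcases le_or_gt |s| M with hle | hlt
    · -- α = (s/M) * |g|
      refine ⟨fun b => (s / M) * |g b|, hg.abs.const_mul _, ?_, ?_⟩
      · rw [integral_const_mul]
        rcases eq_or_lt_of_le hM0 with h0 | h0
        · have : s = 0 := abs_nonpos_iff.mp (hle.trans h0.symm.le)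
          simp [this]
        · rw [← hM]; field_simp
      · rw [cost_eq_integral_max g _ hg (hg.abs.const_mul _)]
        have hc : |s / M| ≤ 1 := by
          rcases eq_or_lt_of_le hM0 with h0 | h0
          · simp [← h0]
          · rw [abs_div, abs_of_pos h0, div_le_one h0]; exact hle
        have heq : ∀ b : ℝ, max |g b| (|s / M| * |g b|) = |g b| := fun b =>
          max_eq_left (by nlinarith [abs_nonneg (g b)])
        simp only [abs_mul, abs_abs, heq]
        rw [← hM]
        exact max_eq_left hle
    · -- α = (s/|s|) * (|g| + (|s| - M) * indicator [0,1])
      have hs : s ≠ 0 := fun h => by simp [h] at hlt; linarith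
      set t : ℝ := s / |s| with ht
      have hts : |t| = 1 := by
        rw [ht, abs_div, abs_abs, div_self (abs_ne_zero.mpr hs)]
      set c : ℝ := |s| - M with hc
      have hc0 : 0 ≤ c := by rw [hc]; linarith
      set ind : ℝ → ℝ := Set.indicator (Set.Icc (0:ℝ) 1) (fun _ => (1:ℝ)) with hind
      have hind_int : Integrable ind := by
        refine (IntegrableOn.integrable_indicator ?_ measurableSet_Icc)
        exact (integrableOn_const_iff (by simp)).mpr (Or.inr (by simp [Real.volume_Icc]))
      have hind_nonneg : ∀ b, 0 ≤ ind b := fun b =>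
        Set.indicator_nonneg (fun _ _ => zero_le_one) b
      have hind_integral : (∫ b, ind b) = 1 := by
        rw [hind]
        rw [MeasureTheory.integral_indicator_const (1:ℝ) measurableSet_Icc]
        simp [Real.volume_Icc]
      set α : ℝ → ℝ := fun b => t * (|g b| + c * ind b) with hα
      have hα_int : Integrable α := ((hg.abs.add (hind_int.const_mul c)).const_mul t)
      refine ⟨α, hα_int, ?_, ?_⟩
      · have : (∫ b, α b) = t * (M + c * 1) := by
          rw [hα]
          rw [integral_const_mul, integral_add hg.abs (hind_int.const_mul c),
            integral_const_mul, hind_integral, ← hM]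
        rw [this, ht]
        field_simp [hc]
        linarith [hc]
      · rw [cost_eq_integral_max g α hg hα_int]
        have habs : (fun b => max |g b| |α b|) = fun b => |g b| + c * ind b := by
          funext b
          have hnn : 0 ≤ c * ind b := mul_nonneg hc0 (hind_nonneg b)
          have h1 : |α b| = |g b| + c * ind b := by
            simp only [hα]
            rw [abs_mul, hts, one_mul,
              abs_of_nonneg (add_nonneg (abs_nonneg _) hnn)]
          rw [h1]
          exact max_eq_right (le_add_of_nonneg_right hnn)
        rw [habs, integral_add hg.abs (hind_int.const_mul c), integral_const_mul,
          hind_integral, ← hM, max_eq_right hlt.le]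
        rw [hc]; ring
  exact le_antisymm (csInf_le ⟨_, hlb⟩ hmem) (le_csInf ⟨_, hmem⟩ hlb)
end
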